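/- Let ρ be a Borel probability measure on ℝ, α > 0, and E_ρ the position observable on L²(ℝ). Then E_ρ is α-regular if and only if ess sup_{x∈ℝ} ρ([x − α/2, x + α/2]) > 1/2, where the essential supremum is taken with respect to Lebesgue measure. -/

import Mathlib

open MeasureTheory Complex
open scoped ENNReal

noncomputable section

/-- `L²(ℝ)` with Lebesgue measure. -/
abbrev L2 : Type := Lp ℂ 2 (volume : Measure ℝ)

/-- `T` is the operator of multiplication by the bounded function `x ↦ ρ(X − x)`. -/
def IsMulByMeas (ρ : Measure ℝ) (X : Set ℝ) (T : L2 →L[ℂ] L2) : Prop :=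
  ∀ f : L2, (T f : ℝ → ℂ) =ᵐ[volume]
    fun x => ((ρ ((· + x) ⁻¹' X)).toReal : ℂ) * (f : ℝ → ℂ) x

/-- An effect is regular if its spectrum extends both strictly above and strictly
below `1/2`. -/
def IsRegularEffect (A : L2 →L[ℂ] L2) : Prop :=
  (∃ z ∈ spectrum ℂ A, 1 / 2 < z.re) ∧ (∃ z ∈ spectrum ℂ A, z.re < 1 / 2)

/-! The operator `E(I_{x;r})` is multiplication by `y ↦ ρ(I_{x-y;r})`, a function with values
in `[0, 1]` whose essential supremum `s` does not depend on `x`. The spectrum of a multiplication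
operator contains the essential range of the multiplier, so it contains `s`, and also `0`, since
`ρ(I_{x-y;r}) → 0` as `y → ∞`; on the other hand the norm of the operator is at most `s`. Hence
`E(I_{x;r})` is regular exactly when `s > 1/2`, and `s` grows with `r`. For `r = α` the operator
is neither `0` nor `I` when `0 < s ≤ 1/2`, and `s > 0` because `ρ` charges every neighbourhood
of a point of its support. -/

open Filter Topology

section Spectrum

lemma ne_algebraMap_of_mem_spectrum {𝕜 A : Type*} [Field 𝕜] [Ring A] [Algebra 𝕜 A] {a : A}
    {k c : 𝕜} (hk : k ∈ spectrum 𝕜 a) (hkc : k ≠ c) : a ≠ algebraMap 𝕜 A c := by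
  rintro rfl
  have : Nontrivial A := by
    by_contra h
    rw [not_nontrivial_iff_subsingleton] at h
    simp [spectrum.of_subsingleton] at hk
  exact hkc (by simpa [spectrum.scalar_eq] using hk)

variable {𝕜 E : Type*} [NontriviallyNormedField 𝕜] [NormedAddCommGroup E] [NormedSpace 𝕜 E]

lemma ContinuousLinearMap.norm_le_opNorm_of_mem_spectrum [CompleteSpace E] {T : E →L[𝕜] E}
    {k : 𝕜} (hk : k ∈ spectrum 𝕜 T) : ‖k‖ ≤ ‖T‖ :=
  (spectrum.norm_le_norm_mul_of_mem hk).trans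
    (mul_le_of_le_one_right (norm_nonneg T) ContinuousLinearMap.norm_id_le)

lemma ContinuousLinearMap.mem_spectrum_of_forall_exists_norm_sub_smul_le (T : E →L[𝕜] E)
    (c : 𝕜) (h : ∀ ε > 0, ∃ f : E, f ≠ 0 ∧ ‖T f - c • f‖ ≤ ε * ‖f‖) : c ∈ spectrum 𝕜 T := by
  rintro ⟨u, hu⟩
  set K := ‖(↑u⁻¹ : E →L[𝕜] E)‖
  obtain ⟨f, hf, hTf⟩ := h (1 / (K + 1)) (by positivity)
  have hbound : ‖f‖ ≤ K * ‖T f - c • f‖ := calc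
    ‖f‖ = ‖(↑u⁻¹ : E →L[𝕜] E) ((u : E →L[𝕜] E) f)‖ := by
      rw [← ContinuousLinearMap.comp_apply, ← ContinuousLinearMap.mul_def, u.inv_mul,
        one_apply_eq_self]
    _ ≤ K * ‖(u : E →L[𝕜] E) f‖ := ContinuousLinearMap.le_opNorm _ _
    _ = K * ‖T f - c • f‖ := by
      rw [hu, norm_sub_rev]
      simp [Algebra.algebraMap_eq_smul_one]
  have hf_pos : 0 < ‖f‖ := norm_pos_iff.mpr hf
  have hK : 0 ≤ K := norm_nonneg _
  have : ‖f‖ * (K + 1) ≤ K * ‖f‖ := calc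
    ‖f‖ * (K + 1) ≤ K * ‖T f - c • f‖ * (K + 1) := by gcongr
    _ ≤ K * (1 / (K + 1) * ‖f‖) * (K + 1) := by gcongr
    _ = K * ‖f‖ := by field_simp
  nlinarith

end Spectrum

section MultiplicationOperator

variable {X : Type*} [MeasurableSpace X] {μ : Measure X} {p : ℝ≥0∞} [Fact (1 ≤ p)]
  {T : Lp ℂ p μ →L[ℂ] Lp ℂ p μ} {m : X → ℂ}

lemma opNorm_le_of_ae_norm_le (hT : ∀ f : Lp ℂ p μ, T f =ᵐ[μ] fun y => m y * f y) {C : ℝ}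
    (hC : 0 ≤ C) (hm : ∀ᵐ y ∂μ, ‖m y‖ ≤ C) : ‖T‖ ≤ C :=
  T.opNorm_le_bound hC fun f => Lp.norm_le_mul_norm_of_ae_le_mul <| by
    filter_upwards [hT f, hm] with y hTy hy
    rw [hTy, norm_mul]
    exact mul_le_mul_of_nonneg_right hy (norm_nonneg _)

lemma mem_spectrum_of_forall_measure_ne_zero [SigmaFinite μ]
    (hT : ∀ f : Lp ℂ p μ, T f =ᵐ[μ] fun y => m y * f y) (hm : Measurable m) (c : ℂ)
    (h : ∀ ε > 0, μ {y | ‖m y - c‖ < ε} ≠ 0) : c ∈ spectrum ℂ T := by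
  refine T.mem_spectrum_of_forall_exists_norm_sub_smul_le c fun ε hε => ?_
  obtain ⟨A, hA, hAsub, hApos, hAfin⟩ := Measure.exists_subset_measure_lt_top
    (measurableSet_lt (hm.sub_const c).norm measurable_const) (pos_iff_ne_zero.2 (h ε hε))
  set f := indicatorConstLp p hA hAfin.ne (1 : ℂ)
  refine ⟨f, ?_, Lp.norm_le_mul_norm_of_ae_le_mul ?_⟩
  · rw [← norm_pos_iff, norm_indicatorConstLp' (zero_lt_one.trans_le Fact.out).ne' hApos.ne',
      norm_one, one_mul]
    exact Real.rpow_pos_of_pos (ENNReal.toReal_pos hApos.ne' hAfin.ne) _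
  · filter_upwards [hT f, Lp.coeFn_sub (T f) (c • f), Lp.coeFn_smul c f,
      indicatorConstLp_coeFn_notMem (p := p) (hs := hA) (hμs := hAfin.ne) (c := (1 : ℂ))]
      with y hTy hsub hsmul hnotMem
    rw [hsub, Pi.sub_apply, hTy, hsmul, Pi.smul_apply, smul_eq_mul, ← sub_mul, norm_mul]
    by_cases hy : y ∈ A
    · exact mul_le_mul_of_nonneg_right (hAsub hy).le (norm_nonneg _)
    · rw [hnotMem hy, norm_zero, mul_zero, mul_zero]

lemma measure_lt_ne_zero_of_lt_essSup {f : X → ℝ≥0∞} {a : ℝ≥0∞} (ha : a < essSup f μ) :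
    μ {y | a < f y} ≠ 0 := by
  intro h
  refine ha.not_ge (essSup_le_of_ae_le a ?_)
  rw [EventuallyLE, ae_iff]
  simpa using h

lemma essSup_toReal_mem_spectrum [SigmaFinite μ] {G : X → ℝ≥0∞} (hG : Measurable G)
    (hpos : 0 < essSup G μ) (htop : essSup G μ ≠ ∞)
    (hT : ∀ f : Lp ℂ p μ, T f =ᵐ[μ] fun y => ((G y).toReal : ℂ) * f y) :
    ((essSup G μ).toReal : ℂ) ∈ spectrum ℂ T := by
  refine mem_spectrum_of_forall_measure_ne_zero hT (by fun_prop) _ fun ε hε => ?_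
  have hlt : essSup G μ - ENNReal.ofReal ε < essSup G μ :=
    ENNReal.sub_lt_self htop hpos.ne' (by simpa using hε)
  refine fun h0 => measure_lt_ne_zero_of_lt_essSup hlt (measure_mono_null_ae ?_ h0)
  filter_upwards [ENNReal.ae_le_essSup G] with y hle hy
  have hy : essSup G μ < G y + ENNReal.ofReal ε :=
    ENNReal.lt_add_of_sub_lt_right (.inl htop) hy
  have hGy : G y ≠ ∞ := (hle.trans_lt htop.lt_top).ne
  have h1 := ENNReal.toReal_mono htop hle
  have h2 := ENNReal.toReal_strict_mono (by finiteness) hy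
  rw [ENNReal.toReal_add hGy ENNReal.ofReal_ne_top, ENNReal.toReal_ofReal hε.le] at h2
  change ‖((G y).toReal : ℂ) - _‖ < ε
  rw [← Complex.ofReal_sub, Complex.norm_real, Real.norm_eq_abs, abs_sub_lt_iff]
  constructor <;> linarith

end MultiplicationOperator

lemma mem_spectrum_of_tendsto_atTop {p : ℝ≥0∞} [Fact (1 ≤ p)]
    {T : Lp ℂ p (volume : Measure ℝ) →L[ℂ] Lp ℂ p volume} {m : ℝ → ℂ}
    (hT : ∀ f : Lp ℂ p volume, T f =ᵐ[volume] fun y => m y * f y) (hm : Measurable m) {c : ℂ}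
    (hc : Tendsto m atTop (𝓝 c)) : c ∈ spectrum ℂ T := by
  refine mem_spectrum_of_forall_measure_ne_zero hT hm c fun ε hε => ?_
  obtain ⟨N, hN⟩ := eventually_atTop.1 (hc.eventually (Metric.ball_mem_nhds c hε))
  refine ne_of_gt (lt_of_lt_of_le ?_ (measure_mono (s := Set.Ici N) fun y hy => ?_))
  · simp
  · simpa [dist_eq_norm] using hN y hy

def windowMass (ρ : Measure ℝ) (r t : ℝ) : ℝ≥0∞ :=
  ρ (Set.Icc (t - r / 2) (t + r / 2))

section windowMass

variable (ρ : Measure ℝ) (r : ℝ)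

@[fun_prop]
lemma measurable_windowMass [SFinite ρ] : Measurable (windowMass ρ r) :=
  measurable_measure_prodMk_left
    ((measurableSet_le (measurable_fst.sub_const _) measurable_snd).inter
      (measurableSet_le measurable_snd (measurable_fst.add_const _)))

variable {r} in
lemma windowMass_mono {r' : ℝ} (h : r ≤ r') (t : ℝ) : windowMass ρ r t ≤ windowMass ρ r' t :=
  measure_mono (Set.Icc_subset_Icc (by linarith) (by linarith))

lemma essSup_windowMass_comp_sub (x : ℝ) :
    essSup (fun y => windowMass ρ r (x - y)) volume = essSup (windowMass ρ r) volume := by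
  have := (MeasurableEquiv.subLeft x).measurableEmbedding.essSup_map_measure
    (μ := volume) (g := windowMass ρ r)
  rw [show ⇑(MeasurableEquiv.subLeft x) = (x - ·) from rfl,
    (Measure.measurePreserving_sub_left volume x).map_eq] at this
  exact this.symm

variable [IsProbabilityMeasure ρ]

lemma essSup_windowMass_le_one : essSup (windowMass ρ r) volume ≤ 1 :=
  essSup_le_of_ae_le 1 (Eventually.of_forall fun _ => prob_le_one)

lemma essSup_windowMass_ne_top : essSup (windowMass ρ r) volume ≠ ∞ :=
  ne_top_of_le_ne_top ENNReal.one_ne_top (essSup_windowMass_le_one ρ r)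

variable {r} in
lemma essSup_windowMass_pos (hr : 0 < r) : 0 < essSup (windowMass ρ r) volume := by
  obtain ⟨s, hs⟩ := Measure.nonempty_support (NeZero.ne ρ)
  rw [pos_iff_ne_zero, Ne, ENNReal.essSup_eq_zero_iff, EventuallyEq, ae_iff]
  refine (Metric.measure_ball_pos volume s (half_pos hr)).ne' ∘
    measure_mono_null fun t ht => ?_
  rw [Metric.mem_ball, Real.dist_eq, abs_sub_lt_iff] at ht
  exact ((Measure.mem_support_iff_forall s).1 hs _
    (Icc_mem_nhds (by linarith) (by linarith))).ne'

lemma tendsto_windowMass_toReal_atBot :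
    Tendsto (fun t => (windowMass ρ r t).toReal) atBot (𝓝 0) := by
  refine tendsto_of_tendsto_of_tendsto_of_le_of_le tendsto_const_nhds
    ((ProbabilityTheory.tendsto_cdf_atBot ρ).comp
      (tendsto_atBot_add_const_right _ (r / 2) tendsto_id))
    (fun _ => ENNReal.toReal_nonneg) fun t => ?_
  rw [Function.comp_apply, id, ProbabilityTheory.cdf_eq_real, measureReal_def]
  exact ENNReal.toReal_mono (measure_ne_top _ _) (measure_mono Set.Icc_subset_Iic_self)

end windowMass

lemma IsMulByMeas.ae_eq_windowMass {ρ : Measure ℝ} {x r : ℝ} {T : L2 →L[ℂ] L2}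
    (hT : IsMulByMeas ρ (Set.Icc (x - r / 2) (x + r / 2)) T) (f : L2) :
    T f =ᵐ[volume] fun y => ((windowMass ρ r (x - y)).toReal : ℂ) * f y := by
  refine (hT f).trans (Eventually.of_forall fun y => ?_)
  simp only [Set.preimage_add_const_Icc, windowMass]
  ring_nf

lemma isRegularEffect_iff_of_mem_spectrum {A : L2 →L[ℂ] L2} {s : ℝ}
    (h0 : (0 : ℂ) ∈ spectrum ℂ A) (hs : (s : ℂ) ∈ spectrum ℂ A) (hA : ‖A‖ ≤ s) :
    IsRegularEffect A ↔ 1 / 2 < s :=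
  ⟨fun ⟨⟨z, hz, hz'⟩, _⟩ => hz'.trans_le <| (Complex.re_le_norm z).trans <|
      (ContinuousLinearMap.norm_le_opNorm_of_mem_spectrum hz).trans hA,
    fun h => ⟨⟨s, hs, by simpa using h⟩, ⟨0, h0, by norm_num⟩⟩⟩

section IntervalEffect

variable {ρ : Measure ℝ} [IsProbabilityMeasure ρ] {x r : ℝ} {T : L2 →L[ℂ] L2}

lemma essSup_windowMass_mem_spectrum (hr : 0 < r)
    (hT : IsMulByMeas ρ (Set.Icc (x - r / 2) (x + r / 2)) T) :
    ((essSup (windowMass ρ r) volume).toReal : ℂ) ∈ spectrum ℂ T := by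
  rw [← essSup_windowMass_comp_sub ρ r x]
  refine essSup_toReal_mem_spectrum (by fun_prop) ?_ ?_ hT.ae_eq_windowMass
  all_goals rw [essSup_windowMass_comp_sub]
  · exact essSup_windowMass_pos ρ hr
  · exact essSup_windowMass_ne_top ρ r

lemma norm_le_essSup_windowMass (hT : IsMulByMeas ρ (Set.Icc (x - r / 2) (x + r / 2)) T) :
    ‖T‖ ≤ (essSup (windowMass ρ r) volume).toReal := by
  refine opNorm_le_of_ae_norm_le hT.ae_eq_windowMass ENNReal.toReal_nonneg ?_
  filter_upwards [ENNReal.ae_le_essSup fun y => windowMass ρ r (x - y)] with y hy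
  rw [essSup_windowMass_comp_sub] at hy
  rw [Complex.norm_real, Real.norm_of_nonneg ENNReal.toReal_nonneg]
  exact ENNReal.toReal_mono (essSup_windowMass_ne_top ρ r) hy

lemma zero_mem_spectrum_of_isMulByMeas_Icc
    (hT : IsMulByMeas ρ (Set.Icc (x - r / 2) (x + r / 2)) T) : (0 : ℂ) ∈ spectrum ℂ T := by
  refine mem_spectrum_of_tendsto_atTop hT.ae_eq_windowMass (by fun_prop) ?_
  have hsub : Tendsto (fun y : ℝ => x - y) atTop atBot := by
    simpa [sub_eq_add_neg] using tendsto_atBot_add_const_left atTop x tendsto_neg_atTop_atBot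
  simpa using ((tendsto_windowMass_toReal_atBot ρ r).comp hsub).ofReal

lemma isRegularEffect_iff_of_isMulByMeas_Icc (hr : 0 < r)
    (hT : IsMulByMeas ρ (Set.Icc (x - r / 2) (x + r / 2)) T) :
    IsRegularEffect T ↔ 1 / 2 < essSup (windowMass ρ r) volume := by
  rw [isRegularEffect_iff_of_mem_spectrum (zero_mem_spectrum_of_isMulByMeas_Icc hT)
    (essSup_windowMass_mem_spectrum hr hT) (norm_le_essSup_windowMass hT),
    ← ENNReal.toReal_lt_toReal (by norm_num) (essSup_windowMass_ne_top ρ r)]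
  norm_num

end IntervalEffect

theorem stmt8 (ρ : Measure ℝ) [IsProbabilityMeasure ρ] (α : ℝ) (hα : 0 < α)
    (E : Set ℝ → (L2 →L[ℂ] L2))
    (hE : ∀ X : Set ℝ, MeasurableSet X → IsMulByMeas ρ X (E X)) :
    (∀ x r : ℝ, α ≤ r →
      E (Set.Icc (x - r / 2) (x + r / 2)) ≠ 0 →
      E (Set.Icc (x - r / 2) (x + r / 2)) ≠ 1 →
      IsRegularEffect (E (Set.Icc (x - r / 2) (x + r / 2)))) ↔
    (1 / 2 : ℝ≥0∞) < essSup (fun x => ρ (Set.Icc (x - α / 2) (x + α / 2))) volume := by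
  have hreg (x r : ℝ) (hr : 0 < r) := isRegularEffect_iff_of_isMulByMeas_Icc hr
    (hE (Set.Icc (x - r / 2) (x + r / 2)) measurableSet_Icc)
  refine ⟨fun H => ?_, fun h x r hr _ _ => (hreg x r (hα.trans_le hr)).2 <|
    h.trans_le (essSup_mono_ae (Eventually.of_forall (windowMass_mono ρ hr)))⟩
  by_contra! hle
  change essSup (windowMass ρ α) volume ≤ 1 / 2 at hle
  set s := (essSup (windowMass ρ α) volume).toReal
  have hs : (s : ℂ) ∈ spectrum ℂ (E (Set.Icc (0 - α / 2) (0 + α / 2))) :=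
    essSup_windowMass_mem_spectrum hα (hE _ measurableSet_Icc)
  have hs_pos : 0 < s :=
    ENNReal.toReal_pos (essSup_windowMass_pos ρ hα).ne' (essSup_windowMass_ne_top ρ α)
  have hs_le : s ≤ 1 / 2 := by simpa using ENNReal.toReal_mono (by norm_num) hle
  refine hle.not_gt ((hreg 0 α hα).1 (H 0 α le_rfl ?_ ?_))
  · simpa using ne_algebraMap_of_mem_spectrum hs (c := 0) (by exact_mod_cast hs_pos.ne')
  · have hs_ne_one : s ≠ 1 := by linarith
    simpa using ne_algebraMap_of_mem_spectrum hs (c := 1) (by exact_mod_cast hs_ne_one)
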